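/- (Laplace-envelope sandwich.) For every n ≥ 2 and every β > 0, the rank free energy F_n(β) := log Z_n(β) satisfies S_n(β) ≤ F_n(β) ≤ S_n(β) + log(1 + log n), where S_n(β) := sup_{t≥0} { log N_n(t) − β t } is the Laplace envelope of the counting function. -/

import Mathlib

open Filter MeasureTheory
open scoped ENNReal

/-- Maximum score `z_n^*`. -/
noncomputable def zmax (n : ℕ) (z : Fin n → ℝ) : ℝ := sSup (Set.range z)

/-- Gap `g_{n,j} = z_n^* - z_{n,j}`. -/
noncomputable def gap (n : ℕ) (z : Fin n → ℝ) (j : Fin n) : ℝ := zmax n z - z j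

/-- Cumulative gap-counting function `N_n(t)`. -/
noncomputable def Ncount (n : ℕ) (z : Fin n → ℝ) (t : ℝ) : ℕ :=
  {j : Fin n | gap n z j ≤ t}.ncard

/-- Normalised partition function `Z_n(β)`. -/
noncomputable def Zfun (n : ℕ) (z : Fin n → ℝ) (β : ℝ) : ℝ :=
  ∑ j : Fin n, Real.exp (-(β * gap n z j))

/-- Softmax probabilities `p_{n,j}(β)`. -/
noncomputable def softmaxP (n : ℕ) (z : Fin n → ℝ) (β : ℝ) (j : Fin n) : ℝ :=
  Real.exp (β * z j) / ∑ ℓ : Fin n, Real.exp (β * z ℓ)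

/-- Shannon entropy `H_n(β)`. -/
noncomputable def entropyH (n : ℕ) (z : Fin n → ℝ) (β : ℝ) : ℝ :=
  -∑ j : Fin n, softmaxP n z β j * Real.log (softmaxP n z β j)

/-- The set of values `log N_n(t) / t` over `t > 0`, whose supremum is `Λ_n`. -/
def lamSet (n : ℕ) (z : Fin n → ℝ) : Set ℝ :=
  {r | ∃ t : ℝ, 0 < t ∧ r = Real.log (Ncount n z t) / t}

/-- Second-largest entry of a finite vector (equals the largest in case of ties). -/
noncomputable def secondLargest (n : ℕ) (v : Fin n → ℝ) : ℝ :=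
  sInf (Set.range fun i => sSup (v '' {j | j ≠ i}))

/-- Top-two weight gap `D_n(β)`. -/
noncomputable def Dgap (n : ℕ) (z : Fin n → ℝ) (β : ℝ) : ℝ :=
  sSup (Set.range (softmaxP n z β)) - secondLargest n (softmaxP n z β)

/-- Rank gap `G_n(β) = max_{i,j} |p_{n,i}(β) - p_{n,j}(β)|`. -/
noncomputable def Ggap (n : ℕ) (z : Fin n → ℝ) (β : ℝ) : ℝ :=
  sSup {x | ∃ i j : Fin n, x = |softmaxP n z β i - softmaxP n z β j|}

/-- Resolved accumulation scale `Λ_n^{(r)}` (with `sup ∅ = 0`), valued in `ℝ≥0∞`. -/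
noncomputable def resolvedLam (n : ℕ) (z : Fin n → ℝ) (r : ℝ) : ℝ≥0∞ :=
  ⨆ t ∈ {t : ℝ | 0 < t ∧ r < Real.log (Ncount n z t)},
    ENNReal.ofReal ((Real.log (Ncount n z t) - r) / t)

/-- Laplace envelope `S_n(β) = sup_{t ≥ 0} (log N_n(t) - β t)`. -/
noncomputable def Sfun (n : ℕ) (z : Fin n → ℝ) (β : ℝ) : ℝ :=
  sSup {x | ∃ t : ℝ, 0 ≤ t ∧ x = Real.log (Ncount n z t) - β * t}

/-- Rank boundary `B_n^rank(r) = sup {β ≥ 0 : log Z_n(β) ≥ r}`, valued in `ℝ≥0∞`. -/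
noncomputable def rankBoundary (n : ℕ) (z : Fin n → ℝ) (r : ℝ) : ℝ≥0∞ :=
  ⨆ β ∈ {β : ℝ | 0 ≤ β ∧ r ≤ Real.log (Zfun n z β)}, ENNReal.ofReal β

/-- `X_n ≍ (log n)^ξ`. -/
def IsLogAsymp (X : ℕ → ℝ) (ξ : ℝ) : Prop :=
  ∃ c₁ c₂ : ℝ, 0 < c₁ ∧ c₁ ≤ c₂ ∧
    ∀ᶠ n : ℕ in Filter.atTop,
      c₁ * Real.log n ^ ξ ≤ X n ∧ X n ≤ c₂ * Real.log n ^ ξ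

/-! The lower bound keeps only the terms of `Z_n(β)` with `g_{n,j} ≤ t`, each at least
`e^{-βt}`, so `N_n(t) e^{-βt} ≤ Z_n(β)`. For the upper bound, taking `t = g_{n,j}` in the
envelope gives `e^{-β g_{n,j}} ≤ e^{S_n(β)} / N_n(g_{n,j})`; if the gaps are listed in
increasing order, the `k`-th one has `N_n ≥ k`, so summing over `j` costs at most the harmonic
number `H_n ≤ 1 + log n`. -/

open Finset

theorem sum_inv_card_filter_le_le_harmonic {α : Type*} [LinearOrder α] {n : ℕ}
    (g : Fin n → α) :
    ∑ j, ((#{i | g i ≤ g j} : ℕ) : ℝ)⁻¹ ≤ harmonic n := by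
  set σ := Tuple.sort g
  have rank_le (k : Fin n) : (k : ℝ) + 1 ≤ #{i | g i ≤ g (σ k)} := by
    have hsub : (Iic k).image σ ⊆ ({i | g i ≤ g (σ k)} : Finset (Fin n)) := by
      intro _ h
      obtain ⟨i, hi, rfl⟩ := mem_image.1 h
      simpa using Tuple.monotone_sort g (mem_Iic.1 hi)
    have := card_le_card hsub
    rw [card_image_of_injective _ σ.injective, Fin.card_Iic] at this
    exact_mod_cast this
  calc ∑ j, ((#{i | g i ≤ g j} : ℕ) : ℝ)⁻¹
      = ∑ k, ((#{i | g i ≤ g (σ k)} : ℕ) : ℝ)⁻¹ :=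
        (Equiv.sum_comp σ fun j => ((#{i | g i ≤ g j} : ℕ) : ℝ)⁻¹).symm
    _ ≤ ∑ k : Fin n, ((k : ℝ) + 1)⁻¹ :=
        sum_le_sum fun k _ => inv_anti₀ (by positivity) (rank_le k)
    _ = harmonic n := by
        rw [Fin.sum_univ_eq_sum_range (fun k => ((k : ℝ) + 1)⁻¹) n, harmonic]
        push_cast
        rfl

theorem card_filter_le_mul_exp_le_sum_exp {ι : Type*} [Fintype ι] (g : ι → ℝ) {β : ℝ}
    (hβ : 0 ≤ β) (t : ℝ) :
    (#{j | g j ≤ t} : ℝ) * Real.exp (-(β * t)) ≤ ∑ j, Real.exp (-(β * g j)) :=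
  calc (#{j | g j ≤ t} : ℝ) * Real.exp (-(β * t))
      = ∑ _j ∈ {j | g j ≤ t}, Real.exp (-(β * t)) := by rw [sum_const, nsmul_eq_mul]
    _ ≤ ∑ j ∈ {j | g j ≤ t}, Real.exp (-(β * g j)) := sum_le_sum fun j hj => by
        have : g j ≤ t := (mem_filter.1 hj).2
        gcongr
    _ ≤ ∑ j, Real.exp (-(β * g j)) :=
        sum_le_sum_of_subset_of_nonneg (subset_univ _) fun _ _ _ => (Real.exp_pos _).le

section Envelope

variable {n : ℕ} (z : Fin n → ℝ)

theorem gap_nonneg (j : Fin n) : 0 ≤ gap n z j :=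
  sub_nonneg.2 (le_csSup (Set.finite_range z).bddAbove ⟨j, rfl⟩)

theorem exists_gap_eq_zero (hn : 0 < n) : ∃ j, gap n z j = 0 := by
  have : Nonempty (Fin n) := ⟨⟨0, hn⟩⟩
  obtain ⟨j, hj⟩ := Finite.exists_max z
  refine ⟨j, le_antisymm ?_ (gap_nonneg z j)⟩
  exact sub_nonpos.2 (csSup_le (Set.range_nonempty z) (by rintro _ ⟨i, rfl⟩; exact hj i))

theorem Ncount_eq_card (t : ℝ) : Ncount n z t = #{j | gap n z j ≤ t} := by
  rw [Ncount, Set.ncard_eq_toFinset_card']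
  simp

theorem one_le_Ncount (hn : 0 < n) {t : ℝ} (ht : 0 ≤ t) : 1 ≤ Ncount n z t := by
  obtain ⟨j, hj⟩ := exists_gap_eq_zero z hn
  rw [Ncount_eq_card, Nat.one_le_iff_ne_zero, ← pos_iff_ne_zero, card_pos]
  exact ⟨j, by simpa [hj] using ht⟩

theorem log_Ncount_sub_le_log_Zfun (hn : 0 < n) {β : ℝ} (hβ : 0 ≤ β) {t : ℝ} (ht : 0 ≤ t) :
    Real.log (Ncount n z t) - β * t ≤ Real.log (Zfun n z β) := by
  have hN : (0 : ℝ) < Ncount n z t := by exact_mod_cast one_le_Ncount z hn ht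
  have hcount := card_filter_le_mul_exp_le_sum_exp (gap n z) hβ t
  rw [← Ncount_eq_card] at hcount
  have := Real.log_le_log (by positivity) hcount
  rwa [Real.log_mul hN.ne' (Real.exp_ne_zero _), Real.log_exp, ← sub_eq_add_neg] at this

theorem Sfun_le_log_Zfun (hn : 0 < n) {β : ℝ} (hβ : 0 ≤ β) :
    Sfun n z β ≤ Real.log (Zfun n z β) :=
  csSup_le ⟨_, 0, le_rfl, rfl⟩ fun _ ⟨_, ht, hx⟩ => hx ▸ log_Ncount_sub_le_log_Zfun z hn hβ ht

theorem log_Ncount_sub_le_Sfun (hn : 0 < n) {β : ℝ} (hβ : 0 ≤ β) {t : ℝ} (ht : 0 ≤ t) :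
    Real.log (Ncount n z t) - β * t ≤ Sfun n z β :=
  le_csSup ⟨_, fun _ ⟨_, hs, hx⟩ => hx ▸ log_Ncount_sub_le_log_Zfun z hn hβ hs⟩ ⟨t, ht, rfl⟩

theorem exp_neg_mul_gap_le (hn : 0 < n) {β : ℝ} (hβ : 0 ≤ β) (j : Fin n) :
    Real.exp (-(β * gap n z j)) ≤ Real.exp (Sfun n z β) * ((Ncount n z (gap n z j) : ℝ))⁻¹ := by
  have hN : (0 : ℝ) < Ncount n z (gap n z j) := by
    exact_mod_cast one_le_Ncount z hn (gap_nonneg z j)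
  have := Real.exp_le_exp.2 (log_Ncount_sub_le_Sfun z hn hβ (gap_nonneg z j))
  rw [Real.exp_sub, Real.exp_log hN, div_le_iff₀ (Real.exp_pos _)] at this
  rw [Real.exp_neg, ← div_eq_mul_inv, le_div_iff₀ hN, inv_mul_le_iff₀ (Real.exp_pos _)]
  linarith

theorem Zfun_le_exp_Sfun_mul_harmonic (hn : 0 < n) {β : ℝ} (hβ : 0 ≤ β) :
    Zfun n z β ≤ Real.exp (Sfun n z β) * harmonic n :=
  calc Zfun n z β
      ≤ ∑ j, Real.exp (Sfun n z β) * ((Ncount n z (gap n z j) : ℝ))⁻¹ :=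
        sum_le_sum fun j _ => exp_neg_mul_gap_le z hn hβ j
    _ ≤ Real.exp (Sfun n z β) * harmonic n := by
        rw [← mul_sum]
        gcongr
        simpa only [Ncount_eq_card] using sum_inv_card_filter_le_le_harmonic (gap n z)

end Envelope

theorem stmt14 (n : ℕ) (hn : 2 ≤ n) (z : Fin n → ℝ) (β : ℝ) (hβ : 0 < β) :
    Sfun n z β ≤ Real.log (Zfun n z β) ∧
      Real.log (Zfun n z β) ≤ Sfun n z β + Real.log (1 + Real.log n) := by
  have hn₀ : 0 < n := by omega
  refine ⟨Sfun_le_log_Zfun z hn₀ hβ.le, ?_⟩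
  have hZ : 0 < Zfun n z β := by
    obtain ⟨j, _⟩ := exists_gap_eq_zero z hn₀
    exact sum_pos (fun _ _ => Real.exp_pos _) ⟨j, mem_univ _⟩
  have hlog : 0 < 1 + Real.log n := by
    linarith [Real.log_nonneg (show (1 : ℝ) ≤ n by exact_mod_cast hn₀)]
  have hbound : Zfun n z β ≤ Real.exp (Sfun n z β) * (1 + Real.log n) :=
    (Zfun_le_exp_Sfun_mul_harmonic z hn₀ hβ.le).trans
      (mul_le_mul_of_nonneg_left (harmonic_le_one_add_log n) (Real.exp_pos _).le)
  have := Real.log_le_log hZ hbound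
  rwa [Real.log_mul (Real.exp_ne_zero _) hlog.ne', Real.log_exp] at this
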